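/- Let M be a closed subspace of H, let (Λ_ω)_{ω∈Ω} be a cg-frame for H with bounds A and B, and let V ∈ B(H, M) be a bounded linear operator with Hilbert adjoint V* : M → H. Then the family (Λ_ω ∘ V*)_{ω∈Ω} of operators M → H_ω is a cg-frame for M (with some bounds) if and only if there exists a constant α > 0 such that ‖V*f‖² ≥ α‖f‖² for all f ∈ M. -/

import Mathlib

open MeasureTheory

noncomputable section

variable {Ω : Type*} [MeasurableSpace Ω]
variable {H : Type*} [NormedAddCommGroup H] [InnerProductSpace ℂ H] [CompleteSpace H]
  [TopologicalSpace.SeparableSpace H]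
variable {G : Ω → Type*} [∀ ω, NormedAddCommGroup (G ω)] [∀ ω, InnerProductSpace ℂ (G ω)]
  [∀ ω, CompleteSpace (G ω)]

/-- Condition (i): for all `h k`, the function `ω ↦ ⟨Λ ω h, Λ ω k⟩` is measurable. -/
def CgMeasurable (μ : Measure Ω) (Λ : ∀ ω, H →L[ℂ] G ω) : Prop :=
  ∀ h k : H, Measurable fun ω => (inner ℂ (Λ ω h) (Λ ω k) : ℂ)

/-- Condition (ii): the orthonormality relation for the adjoints. -/
def CgOrthoCondition (μ : Measure Ω) (Λ : ∀ ω, H →L[ℂ] G ω) : Prop :=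
  ∀ᵐ ν ∂μ, ∀ g : G ν, ∀ f : ∀ ω, G ω,
    Integrable (fun ω => ‖f ω‖ ^ 2) μ →
    Integrable (fun ω =>
      (inner ℂ (ContinuousLinearMap.adjoint (Λ ω) (f ω))
        (ContinuousLinearMap.adjoint (Λ ν) g) : ℂ)) μ →
    ∫ ω, (inner ℂ (ContinuousLinearMap.adjoint (Λ ω) (f ω))
        (ContinuousLinearMap.adjoint (Λ ν) g) : ℂ) ∂μ = (inner ℂ (f ν) g : ℂ)

/-- A `cg`-orthonormal system: conditions (i) and (ii). -/
def IsCgOrthonormalSystem (μ : Measure Ω) (Λ : ∀ ω, H →L[ℂ] G ω) : Prop :=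
  CgMeasurable μ Λ ∧ CgOrthoCondition μ Λ

/-- A `cg`-orthonormal basis: conditions (i), (ii) and (iii). -/
def IsCgOrthonormalBasis (μ : Measure Ω) (Λ : ∀ ω, H →L[ℂ] G ω) : Prop :=
  IsCgOrthonormalSystem μ Λ ∧
    ∀ h : H, Integrable (fun ω => ‖Λ ω h‖ ^ 2) μ ∧ ∫ ω, ‖Λ ω h‖ ^ 2 ∂μ = ‖h‖ ^ 2

/-- A `cg`-frame with bounds `A` and `B`. -/
def IsCgFrameWith (μ : Measure Ω) (Λ : ∀ ω, H →L[ℂ] G ω) (A B : ℝ) : Prop :=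
  CgMeasurable μ Λ ∧
    ∀ h : H, Integrable (fun ω => ‖Λ ω h‖ ^ 2) μ ∧
      A * ‖h‖ ^ 2 ≤ ∫ ω, ‖Λ ω h‖ ^ 2 ∂μ ∧ ∫ ω, ‖Λ ω h‖ ^ 2 ∂μ ≤ B * ‖h‖ ^ 2

/-- A `cg`-frame (with some bounds `0 < A ≤ B`). -/
def IsCgFrame (μ : Measure Ω) (Λ : ∀ ω, H →L[ℂ] G ω) : Prop :=
  ∃ A B : ℝ, 0 < A ∧ A ≤ B ∧ IsCgFrameWith μ Λ A B

/-- A `cg`-Bessel family with Bessel bound `B`. -/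
def IsCgBessel (μ : Measure Ω) (Λ : ∀ ω, H →L[ℂ] G ω) (B : ℝ) : Prop :=
  CgMeasurable μ Λ ∧
    ∀ h : H, Integrable (fun ω => ‖Λ ω h‖ ^ 2) μ ∧ ∫ ω, ‖Λ ω h‖ ^ 2 ∂μ ≤ B * ‖h‖ ^ 2

/-- A tight `cg`-frame with frame bound `A`. -/
def IsTightCgFrame (μ : Measure Ω) (Λ : ∀ ω, H →L[ℂ] G ω) (A : ℝ) : Prop :=
  CgMeasurable μ Λ ∧
    ∀ h : H, Integrable (fun ω => ‖Λ ω h‖ ^ 2) μ ∧ ∫ ω, ‖Λ ω h‖ ^ 2 ∂μ = A * ‖h‖ ^ 2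

/-- A Parseval `cg`-frame. -/
def IsParsevalCgFrame (μ : Measure Ω) (Λ : ∀ ω, H →L[ℂ] G ω) : Prop :=
  CgMeasurable μ Λ ∧
    ∀ h : H, Integrable (fun ω => ‖Λ ω h‖ ^ 2) μ ∧ ∫ ω, ‖Λ ω h‖ ^ 2 ∂μ = ‖h‖ ^ 2

/-- A `cg`-complete family. -/
def CgComplete (μ : Measure Ω) (Λ : ∀ ω, H →L[ℂ] G ω) : Prop :=
  ∀ h : H, (∀ᵐ ω ∂μ, Λ ω h = 0) → h = 0

/-!
Evaluate the frame inequalities of `Λ` at `V* f`. If `α ‖f‖² ≤ ‖V* f‖²`, then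
`A α ‖f‖² ≤ ∫ ‖Λ_ω V* f‖² ≤ B ‖V*‖² ‖f‖²`. Conversely, a lower frame bound `A'` of `Λ ∘ V*`
gives `A' ‖f‖² ≤ ∫ ‖Λ_ω V* f‖² ≤ B ‖V* f‖²`, so `α = A' / B` works.
-/

section Composition

omit [CompleteSpace H] [TopologicalSpace.SeparableSpace H] [∀ ω, CompleteSpace (G ω)]

variable {E : Type*} [NormedAddCommGroup E] [InnerProductSpace ℂ E]
  {μ : Measure Ω} {Λ : ∀ ω, H →L[ℂ] G ω} {A B : ℝ}

theorem CgMeasurable.comp (hΛ : CgMeasurable μ Λ) (T : E →L[ℂ] H) :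
    CgMeasurable μ fun ω => (Λ ω).comp T :=
  fun h k => hΛ (T h) (T k)

theorem IsCgFrameWith.isCgBessel (hΛ : IsCgFrameWith μ Λ A B) : IsCgBessel μ Λ B :=
  ⟨hΛ.1, fun h => ⟨(hΛ.2 h).1, (hΛ.2 h).2.2⟩⟩

theorem IsCgBessel.mono {B' : ℝ} (hΛ : IsCgBessel μ Λ B) (hBB' : B ≤ B') : IsCgBessel μ Λ B' :=
  ⟨hΛ.1, fun h => ⟨(hΛ.2 h).1,
    (hΛ.2 h).2.trans (mul_le_mul_of_nonneg_right hBB' (by positivity))⟩⟩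

theorem IsCgBessel.isCgFrameWith (hΛ : IsCgBessel μ Λ B)
    (hlower : ∀ h, A * ‖h‖ ^ 2 ≤ ∫ ω, ‖Λ ω h‖ ^ 2 ∂μ) : IsCgFrameWith μ Λ A B :=
  ⟨hΛ.1, fun h => ⟨(hΛ.2 h).1, hlower h, (hΛ.2 h).2⟩⟩

theorem IsCgBessel.comp (hΛ : IsCgBessel μ Λ B) (hB : 0 ≤ B) (T : E →L[ℂ] H) :
    IsCgBessel μ (fun ω => (Λ ω).comp T) (B * ‖T‖ ^ 2) := by
  refine ⟨hΛ.1.comp T, fun f => ⟨(hΛ.2 (T f)).1, ?_⟩⟩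
  calc ∫ ω, ‖Λ ω (T f)‖ ^ 2 ∂μ ≤ B * ‖T f‖ ^ 2 := (hΛ.2 (T f)).2
    _ ≤ B * (‖T‖ * ‖f‖) ^ 2 := by gcongr; exact T.le_opNorm f
    _ = B * ‖T‖ ^ 2 * ‖f‖ ^ 2 := by ring

theorem IsCgFrameWith.mul_norm_sq_le_integral_comp {α : ℝ} (hΛ : IsCgFrameWith μ Λ A B)
    (hA : 0 ≤ A) {T : E →L[ℂ] H} (hT : ∀ f, α * ‖f‖ ^ 2 ≤ ‖T f‖ ^ 2) (f : E) :
    A * α * ‖f‖ ^ 2 ≤ ∫ ω, ‖Λ ω (T f)‖ ^ 2 ∂μ :=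
  calc A * α * ‖f‖ ^ 2 = A * (α * ‖f‖ ^ 2) := mul_assoc _ _ _
    _ ≤ A * ‖T f‖ ^ 2 := mul_le_mul_of_nonneg_left (hT f) hA
    _ ≤ ∫ ω, ‖Λ ω (T f)‖ ^ 2 ∂μ := (hΛ.2 (T f)).2.1

theorem IsCgBessel.mul_norm_sq_le_of_comp {A' B' : ℝ} (hΛ : IsCgBessel μ Λ B) {T : E →L[ℂ] H}
    (hΛT : IsCgFrameWith μ (fun ω => (Λ ω).comp T) A' B') (f : E) :
    A' * ‖f‖ ^ 2 ≤ B * ‖T f‖ ^ 2 :=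
  (hΛT.2 f).2.1.trans (hΛ.2 (T f)).2

theorem isCgFrame_comp_iff (hA : 0 < A) (hAB : A ≤ B) (hΛ : IsCgFrameWith μ Λ A B)
    (T : E →L[ℂ] H) :
    IsCgFrame μ (fun ω => (Λ ω).comp T) ↔ ∃ α : ℝ, 0 < α ∧ ∀ f, α * ‖f‖ ^ 2 ≤ ‖T f‖ ^ 2 := by
  have hB : 0 < B := hA.trans_le hAB
  constructor
  · rintro ⟨A', B', hA', -, hΛT⟩
    refine ⟨A' / B, div_pos hA' hB, fun f => ?_⟩
    rw [div_mul_eq_mul_div, div_le_iff₀ hB, mul_comm _ B]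
    exact hΛ.isCgBessel.mul_norm_sq_le_of_comp hΛT f
  · rintro ⟨α, hα, hT⟩
    refine ⟨A * α, max (A * α) (B * ‖T‖ ^ 2), mul_pos hA hα, le_max_left _ _, ?_⟩
    exact ((hΛ.isCgBessel.comp hB.le T).mono (le_max_right _ _)).isCgFrameWith
      (hΛ.mul_norm_sq_le_integral_comp hA.le hT)

end Composition

theorem stmt_11 (μ : Measure Ω) (Λ : ∀ ω, H →L[ℂ] G ω) (A B : ℝ)
    (hA : 0 < A) (hAB : A ≤ B) (hΛ : IsCgFrameWith μ Λ A B)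
    (M : Submodule ℂ H) [CompleteSpace M] (V : H →L[ℂ] M) :
    IsCgFrame μ (fun ω => (Λ ω).comp (ContinuousLinearMap.adjoint V)) ↔
      ∃ α : ℝ, 0 < α ∧ ∀ f : M, α * ‖f‖ ^ 2 ≤ ‖ContinuousLinearMap.adjoint V f‖ ^ 2 :=
  isCgFrame_comp_iff hA hAB hΛ (ContinuousLinearMap.adjoint V)
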